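/- Fix dimensions n, p, m. Let A : ℝ^n → ℝ^n, B an n×p real matrix, C : ℝ^n → ℝ^m, R an m×m symmetric positive definite matrix, Q_η a p×p symmetric positive definite matrix, and y ∈ ℝ^m a fixed measurement. Suppose: (i) there is a nonempty finite index set I₀ and for each i ∈ I₀ a symmetric (n+1)×(n+1) matrix Q^{v,0}_i whose upper-left n×n block N_i is positive semidefinite, such that V₀(x) = min_{i∈I₀} (1/2)[xᵀ 1] Q^{v,0}_i [x; 1] for all x ∈ ℝ^n; (ii) there is a nonempty finite family of symmetric (n+1)×(n+1) matrices Q^{c}_j, j ∈ J, such that −yᵀ R C(x) = min_{j∈J} [xᵀ 1] Q^{c}_j [x; 1] for all x; (iii) there is a nonempty finite family of symmetric (n+1)×(n+1) matrices Q^{b}_ℓ, ℓ ∈ L, such that C(x)ᵀ R C(x) = min_{ℓ∈L} [xᵀ 1] Q^{b}_ℓ [x; 1] for all x; (iv) for every n×n symmetric positive semidefinite matrix M there is a nonempty finite family of symmetric (n+1)×(n+1) matrices Q^{a}(M)_s such that A(x)ᵀ M A(x) = min_s [xᵀ 1] Q^{a}(M)_s [x; 1] for all x; and (v) for every row vector M̃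 ∈ ℝ^{1×n} there is a nonempty finite family of symmetric (n+1)×(n+1) matrices Q^{ã}(M̃)_t such that M̃ A(x) = min_t [xᵀ 1] Q^{ã}(M̃)_t [x; 1] for all x. Define V₁ : ℝ^n → ℝ by V₁(x) = ⨅_{w ∈ ℝ^p} ( V₀(A(x) + B w) + (1/2) wᵀ Q_η w + (1/2)(y − C(x))ᵀ R (y − C(x)) ). Then there exist a nonempty finite index set I₁ and symmetric (n+1)×(n+1) matrices Q^{v,1}_k, k ∈ I₁, such that V₁(x) = min_{k∈I₁} (1/2)[xᵀ 1] Q^{v,1}_k [x; 1] for all x ∈ ℝ^n. -/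

import Mathlib

/-!
Write the `i`-th quadratic of `V₀` as `½ uᵀNᵢu + bᵢᵀu + cᵢ/2` with `u = A(x) + Bw`. The minimum
over the finite index `i` commutes with the infimum over `w`, and for fixed `i` the infimum over
`w` of `½ (z + Bw)ᵀNᵢ(z + Bw) + bᵢᵀ(z + Bw) + ½ wᵀQ_ηw` is attained (complete the square in `w`,
the Hessian `BᵀNᵢB + Q_η` being positive definite). Its value is `½ zᵀMᵢz + mᵢᵀz + const`, where
`Mᵢ = Nᵢ - NᵢB(BᵀNᵢB + Q_η)⁻¹BᵀNᵢ` is the Riccati update of `Nᵢ` and is again positive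
semidefinite. At `z = A(x)` the terms `A(x)ᵀMᵢA(x)` and `mᵢᵀA(x)` have min-plus expansions by
hypothesis, and so do the two output terms into which `½‖y - C(x)‖²_R` splits. Min-plus expansions
are closed under sums (index by pairs), nonnegative multiples, constants and finite minima (index
by dependent pairs), hence `V₁` has one.
-/

open Matrix

/-- The vector `x` augmented by a final entry `1`, i.e. `[x; 1] ∈ ℝ^{n+1}`. -/
noncomputable def augVec {n : ℕ} (x : Fin n → ℝ) : Fin (n + 1) → ℝ :=
  Fin.snoc x 1

/-- The quadratic form `[xᵀ 1] Q [x; 1]` for an `(n+1)×(n+1)` matrix `Q`. -/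
noncomputable def augQuadForm {n : ℕ} (Q : Matrix (Fin (n + 1)) (Fin (n + 1)) ℝ)
    (x : Fin n → ℝ) : ℝ :=
  augVec x ⬝ᵥ Q.mulVec (augVec x)

open Set

theorem Finite.ciInf_sigma {α ι : Type*} {κ : ι → Type*} [ConditionallyCompleteLattice α]
    [Finite ι] [Nonempty ι] [∀ i, Finite (κ i)] [∀ i, Nonempty (κ i)]
    (f : (Σ i, κ i) → α) : ⨅ s, f s = ⨅ i, ⨅ j, f ⟨i, j⟩ :=
  have : Nonempty (Σ i, κ i) := ⟨⟨Classical.arbitrary ι, Classical.arbitrary _⟩⟩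
  le_antisymm (le_ciInf fun i => le_ciInf fun j => Finite.ciInf_le f ⟨i, j⟩)
    (le_ciInf fun s => (Finite.ciInf_le _ s.1).trans (Finite.ciInf_le _ s.2))

theorem ciInf_comm_of_finite {α ι κ : Type*} [ConditionallyCompleteLattice α]
    [Finite ι] [Nonempty ι] [Nonempty κ] {f : ι → κ → α} (hf : ∀ i, BddBelow (range (f i))) :
    ⨅ k, ⨅ i, f i k = ⨅ i, ⨅ k, f i k := by
  choose m hm using hf
  have hbdd : BddBelow (range fun k => ⨅ i, f i k) :=
    ⟨⨅ i, m i, by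
      rintro _ ⟨k, rfl⟩
      exact Finite.ciInf_mono fun i => hm i (mem_range_self k)⟩
  refine le_antisymm (le_ciInf fun i => le_ciInf fun k => ?_)
    (le_ciInf fun k => le_ciInf fun i => ?_)
  · exact (ciInf_le hbdd k).trans (Finite.ciInf_le _ i)
  · exact (Finite.ciInf_le _ i).trans (ciInf_le ⟨m i, hm i⟩ k)

section LinearOrder

variable {α ι κ : Type*} [ConditionallyCompleteLinearOrder α] [Add α] [Finite ι] [Nonempty ι]

theorem ciInf_add_of_finite [AddRightMono α] (f : ι → α) (a : α) :
    (⨅ i, f i) + a = ⨅ i, (f i + a) :=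
  Finite.map_iInf_of_monotoneOn (s := univ) (fun _ _ _ _ h => add_le_add_left h a)
    fun _ => mem_univ _

theorem add_ciInf_of_finite [AddLeftMono α] (a : α) (f : ι → α) :
    a + ⨅ i, f i = ⨅ i, (a + f i) :=
  Finite.map_iInf_of_monotoneOn (s := univ) (fun _ _ _ _ h => add_le_add_right h a)
    fun _ => mem_univ _

theorem ciInf_add_ciInf_of_finite [AddLeftMono α] [AddRightMono α] [Finite κ] [Nonempty κ]
    (f : ι → α) (g : κ → α) :
    (⨅ i, f i) + ⨅ j, g j = ⨅ p : ι × κ, (f p.1 + g p.2) := by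
  rw [ciInf_add_of_finite, Finite.ciInf_prod]
  simp only [add_ciInf_of_finite]

end LinearOrder

section Quadratic

variable {ι κ : Type*} [Fintype ι] [Fintype κ]

theorem Matrix.IsSymm.dotProduct_mulVec_comm {M : Matrix ι ι ℝ} (hM : M.IsSymm) (u v : ι → ℝ) :
    u ⬝ᵥ M *ᵥ v = v ⬝ᵥ M *ᵥ u := by
  simpa only [hM.eq] using dotProduct_transpose_mulVec M u v

theorem Matrix.IsSymm.dotProduct_add_mulVec_add {M : Matrix ι ι ℝ} (hM : M.IsSymm) (u v : ι → ℝ) :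
    (u + v) ⬝ᵥ M *ᵥ (u + v) = u ⬝ᵥ M *ᵥ u + 2 * (v ⬝ᵥ M *ᵥ u) + v ⬝ᵥ M *ᵥ v := by
  simp only [mulVec_add, dotProduct_add, add_dotProduct, hM.dotProduct_mulVec_comm u v]
  ring

theorem Matrix.PosSemidef.dotProduct_mulVec_nonneg' {M : Matrix ι ι ℝ} (hM : M.PosSemidef)
    (u : ι → ℝ) : 0 ≤ u ⬝ᵥ M *ᵥ u := by
  simpa using hM.dotProduct_mulVec_nonneg u

theorem Matrix.mulVec_dotProduct (A : Matrix ι κ ℝ) (w : κ → ℝ) (v : ι → ℝ) :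
    (A *ᵥ w) ⬝ᵥ v = w ⬝ᵥ Aᵀ *ᵥ v :=
  (dotProduct_comm _ _).trans (dotProduct_transpose_mulVec A w v).symm

theorem quadratic_affine_expand {B : Matrix ι κ ℝ} {Qη : Matrix κ κ ℝ} {N : Matrix ι ι ℝ}
    (hN : N.IsSymm) (b z : ι → ℝ) (c : ℝ) (w : κ → ℝ) :
    (1 / 2) * ((z + B *ᵥ w) ⬝ᵥ N *ᵥ (z + B *ᵥ w)) + b ⬝ᵥ (z + B *ᵥ w)
        + (1 / 2) * (w ⬝ᵥ Qη *ᵥ w) + c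
      = (1 / 2) * (w ⬝ᵥ (Bᵀ * N * B + Qη) *ᵥ w) + (Bᵀ *ᵥ (N *ᵥ z + b)) ⬝ᵥ w
        + ((1 / 2) * (z ⬝ᵥ N *ᵥ z) + b ⬝ᵥ z + c) := by
  have h_cross : (B *ᵥ w) ⬝ᵥ N *ᵥ z = (Bᵀ *ᵥ (N *ᵥ z)) ⬝ᵥ w := by
    rw [mulVec_dotProduct, dotProduct_comm]
  have h_quad : (B *ᵥ w) ⬝ᵥ N *ᵥ (B *ᵥ w) = w ⬝ᵥ (Bᵀ * N * B) *ᵥ w := by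
    rw [mulVec_dotProduct, mulVec_mulVec, mulVec_mulVec, Matrix.mul_assoc]
  have h_lin : b ⬝ᵥ B *ᵥ w = (Bᵀ *ᵥ b) ⬝ᵥ w := by
    rw [mulVec_dotProduct, transpose_transpose]
  rw [hN.dotProduct_add_mulVec_add, h_cross, h_quad, dotProduct_add, h_lin, add_mulVec,
    dotProduct_add, mulVec_add, add_dotProduct]
  ring

variable [DecidableEq κ]

theorem isLeast_quadratic {S : Matrix κ κ ℝ} (hS : S.PosDef) (v : κ → ℝ) (c : ℝ) :
    IsLeast (range fun w => (1 / 2) * (w ⬝ᵥ S *ᵥ w) + v ⬝ᵥ w + c)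
      (c - (1 / 2) * (v ⬝ᵥ S⁻¹ *ᵥ v)) := by
  have hS_symm : S.IsSymm := isHermitian_iff_isSymm.mp hS.isHermitian
  have hdet : IsUnit S.det := (isUnit_iff_isUnit_det S).mp hS.isUnit
  obtain ⟨u, rfl⟩ : ∃ u, S *ᵥ u = v :=
    ⟨S⁻¹ *ᵥ v, by rw [mulVec_mulVec, mul_nonsing_inv _ hdet, one_mulVec]⟩
  have hsq : ∀ w, (1 / 2) * (w ⬝ᵥ S *ᵥ w) + (S *ᵥ u) ⬝ᵥ w + c
      = (1 / 2) * ((w + u) ⬝ᵥ S *ᵥ (w + u)) + (c - (1 / 2) * ((S *ᵥ u) ⬝ᵥ S⁻¹ *ᵥ (S *ᵥ u))) := by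
    intro w
    rw [hS_symm.dotProduct_add_mulVec_add, mulVec_mulVec, nonsing_inv_mul _ hdet, one_mulVec,
      dotProduct_comm (S *ᵥ u), dotProduct_comm (S *ᵥ u), hS_symm.dotProduct_mulVec_comm u w]
    ring
  refine ⟨⟨-u, by simp only [hsq, neg_add_cancel, mulVec_zero, dotProduct_zero]; ring⟩, ?_⟩
  rintro _ ⟨w, rfl⟩
  simp only [hsq]
  linarith [hS.posSemidef.dotProduct_mulVec_nonneg' (w + u)]

end Quadratic

section Riccati

variable {ι κ : Type*} [Fintype ι] [Fintype κ] [DecidableEq κ]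
  (B : Matrix ι κ ℝ) (Qη : Matrix κ κ ℝ) (N : Matrix ι ι ℝ)

noncomputable def riccatiGain : Matrix ι ι ℝ :=
  B * (Bᵀ * N * B + Qη)⁻¹ * Bᵀ

noncomputable def riccatiUpdate : Matrix ι ι ℝ :=
  N - N * riccatiGain B Qη N * N

variable {B Qη N}

theorem riccatiGain_isSymm (hN : N.IsSymm) (hQη : Qη.IsSymm) : (riccatiGain B Qη N).IsSymm := by
  have hS : (Bᵀ * N * B + Qη).IsSymm := by
    rw [IsSymm, transpose_add, transpose_mul, transpose_mul, transpose_transpose, hN.eq, hQη.eq,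
      Matrix.mul_assoc]
  rw [IsSymm, riccatiGain, transpose_mul, transpose_mul, transpose_transpose, hS.inv.eq]
  exact (Matrix.mul_assoc _ _ _).symm

theorem riccatiUpdate_isSymm (hN : N.IsSymm) (hQη : Qη.IsSymm) :
    (riccatiUpdate B Qη N).IsSymm := by
  rw [IsSymm, riccatiUpdate, transpose_sub, transpose_mul, transpose_mul, hN.eq,
    (riccatiGain_isSymm hN hQη).eq, Matrix.mul_assoc]

theorem quadratic_affine_min_eq_riccati (hN : N.IsSymm) (hQη : Qη.IsSymm) (b z : ι → ℝ) (c : ℝ) :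
    (1 / 2) * (z ⬝ᵥ N *ᵥ z) + b ⬝ᵥ z + c
        - (1 / 2) * ((Bᵀ *ᵥ (N *ᵥ z + b)) ⬝ᵥ (Bᵀ * N * B + Qη)⁻¹ *ᵥ (Bᵀ *ᵥ (N *ᵥ z + b)))
      = (1 / 2) * (z ⬝ᵥ riccatiUpdate B Qη N *ᵥ z) + (b - N *ᵥ (riccatiGain B Qη N *ᵥ b)) ⬝ᵥ z
        + (c - (1 / 2) * (b ⬝ᵥ riccatiGain B Qη N *ᵥ b)) := by
  have hK : (riccatiGain B Qη N).IsSymm := riccatiGain_isSymm hN hQη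
  have hgain : ∀ u, (Bᵀ *ᵥ u) ⬝ᵥ (Bᵀ * N * B + Qη)⁻¹ *ᵥ (Bᵀ *ᵥ u)
      = u ⬝ᵥ riccatiGain B Qη N *ᵥ u := by
    intro u
    rw [mulVec_dotProduct, transpose_transpose, mulVec_mulVec, mulVec_mulVec, riccatiGain]
  have h_quad : (N *ᵥ z) ⬝ᵥ riccatiGain B Qη N *ᵥ (N *ᵥ z)
      = z ⬝ᵥ (N * riccatiGain B Qη N * N) *ᵥ z := by
    rw [mulVec_dotProduct, hN.eq, mulVec_mulVec, mulVec_mulVec, Matrix.mul_assoc]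
  have h_cross : b ⬝ᵥ riccatiGain B Qη N *ᵥ (N *ᵥ z) = (N *ᵥ (riccatiGain B Qη N *ᵥ b)) ⬝ᵥ z := by
    rw [hK.dotProduct_mulVec_comm, mulVec_dotProduct, hN.eq, dotProduct_comm]
  rw [hgain, hK.dotProduct_add_mulVec_add, h_quad, h_cross, riccatiUpdate, sub_mulVec,
    dotProduct_sub, sub_dotProduct]
  ring

theorem isLeast_quadratic_affine (hN : N.PosSemidef) (hQη : Qη.PosDef) (b z : ι → ℝ) (c : ℝ) :
    IsLeast (range fun w => (1 / 2) * ((z + B *ᵥ w) ⬝ᵥ N *ᵥ (z + B *ᵥ w)) + b ⬝ᵥ (z + B *ᵥ w)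
        + (1 / 2) * (w ⬝ᵥ Qη *ᵥ w) + c)
      ((1 / 2) * (z ⬝ᵥ riccatiUpdate B Qη N *ᵥ z) + (b - N *ᵥ (riccatiGain B Qη N *ᵥ b)) ⬝ᵥ z
        + (c - (1 / 2) * (b ⬝ᵥ riccatiGain B Qη N *ᵥ b))) := by
  have hN_symm : N.IsSymm := isHermitian_iff_isSymm.mp hN.isHermitian
  have hQη_symm : Qη.IsSymm := isHermitian_iff_isSymm.mp hQη.isHermitian
  have hS : (Bᵀ * N * B + Qη).PosDef := by
    refine PosDef.posSemidef_add ?_ hQη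
    simpa using hN.conjTranspose_mul_mul_same B
  simp only [quadratic_affine_expand hN_symm, ← quadratic_affine_min_eq_riccati hN_symm hQη_symm]
  exact isLeast_quadratic hS _ _

theorem riccatiUpdate_posSemidef (hN : N.PosSemidef) (hQη : Qη.PosDef) :
    (riccatiUpdate B Qη N).PosSemidef := by
  have hN_symm : N.IsSymm := isHermitian_iff_isSymm.mp hN.isHermitian
  have hQη_symm : Qη.IsSymm := isHermitian_iff_isSymm.mp hQη.isHermitian
  refine .of_dotProduct_mulVec_nonneg
    (isHermitian_iff_isSymm.mpr (riccatiUpdate_isSymm hN_symm hQη_symm)) fun z => ?_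
  -- with `b = 0` and `c = 0` the attained minimum `½ zᵀMz` is a value of a nonnegative function
  obtain ⟨w, hw⟩ := (isLeast_quadratic_affine (B := B) hN hQη 0 z 0).1
  simp only [mulVec_zero, sub_zero, zero_dotProduct, dotProduct_zero, add_zero, mul_zero] at hw
  rw [star_trivial]
  linarith [hN.dotProduct_mulVec_nonneg' (z + B *ᵥ w), hQη.posSemidef.dotProduct_mulVec_nonneg' w]

theorem iInf_iInf_quadratic_affine_eq {ι₀ : Type*} [Finite ι₀] [Nonempty ι₀]
    {N : ι₀ → Matrix ι ι ℝ} (hN : ∀ i, (N i).PosSemidef) (hQη : Qη.PosDef) (b : ι₀ → ι → ℝ)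
    (c : ι₀ → ℝ) (z : ι → ℝ) :
    ⨅ w, ⨅ i, ((1 / 2) * ((z + B *ᵥ w) ⬝ᵥ N i *ᵥ (z + B *ᵥ w)) + b i ⬝ᵥ (z + B *ᵥ w)
        + (1 / 2) * (w ⬝ᵥ Qη *ᵥ w) + c i)
      = ⨅ i, ((1 / 2) * (z ⬝ᵥ riccatiUpdate B Qη (N i) *ᵥ z)
        + (b i - N i *ᵥ (riccatiGain B Qη (N i) *ᵥ b i)) ⬝ᵥ z
        + (c i - (1 / 2) * (b i ⬝ᵥ riccatiGain B Qη (N i) *ᵥ b i))) := by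
  have h_least := fun i => isLeast_quadratic_affine (B := B) (hN i) hQη (b i) z (c i)
  rw [ciInf_comm_of_finite fun i => (h_least i).bddBelow]
  exact iInf_congr fun i => (h_least i).isGLB.ciInf_eq

end Riccati

section Augmented

variable {n : ℕ}

theorem augQuadForm_add (P Q : Matrix (Fin (n + 1)) (Fin (n + 1)) ℝ) (x : Fin n → ℝ) :
    augQuadForm (P + Q) x = augQuadForm P x + augQuadForm Q x := by
  simp only [augQuadForm, add_mulVec, dotProduct_add]

theorem augQuadForm_smul (c : ℝ) (Q : Matrix (Fin (n + 1)) (Fin (n + 1)) ℝ) (x : Fin n → ℝ) :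
    augQuadForm (c • Q) x = c * augQuadForm Q x := by
  simp only [augQuadForm, smul_mulVec, dotProduct_smul, smul_eq_mul]

theorem augQuadForm_single_last (c : ℝ) (x : Fin n → ℝ) :
    augQuadForm (single (Fin.last n) (Fin.last n) c) x = c := by
  simp [augQuadForm, single_mulVec_eq, augVec]

theorem augQuadForm_eq {Q : Matrix (Fin (n + 1)) (Fin (n + 1)) ℝ} (hQ : Q.IsSymm)
    (x : Fin n → ℝ) :
    augQuadForm Q x = x ⬝ᵥ Q.submatrix Fin.castSucc Fin.castSucc *ᵥ x
      + 2 * ((fun j => Q j.castSucc (Fin.last n)) ⬝ᵥ x) + Q (Fin.last n) (Fin.last n) := by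
  simp only [augQuadForm, dotProduct, mulVec, Fin.sum_univ_castSucc, augVec, Fin.snoc_castSucc,
    Fin.snoc_last, submatrix_apply, hQ.apply (Fin.last n), mul_one, one_mul, mul_add,
    Finset.sum_add_distrib, mul_comm (x _) (Q _ _)]
  ring

end Augmented

def HasMinPlusExpansion {n : ℕ} (f : (Fin n → ℝ) → ℝ) : Prop :=
  ∃ (ι : Type) (_ : Finite ι) (_ : Nonempty ι) (Q : ι → Matrix (Fin (n + 1)) (Fin (n + 1)) ℝ),
    (∀ i, (Q i).IsSymm) ∧ ∀ x, f x = ⨅ i, augQuadForm (Q i) x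

namespace HasMinPlusExpansion

variable {n : ℕ} {f g : (Fin n → ℝ) → ℝ}

theorem iff_exists_fin :
    HasMinPlusExpansion f ↔ ∃ (k : ℕ) (Q : Fin (k + 1) → Matrix (Fin (n + 1)) (Fin (n + 1)) ℝ),
      (∀ j, (Q j).IsSymm) ∧ ∀ x, f x = ⨅ j, augQuadForm (Q j) x := by
  refine ⟨fun ⟨ι, _, _, Q, hQ, hf⟩ => ?_,
    fun ⟨k, Q, hQ, hf⟩ => ⟨_, inferInstance, inferInstance, Q, hQ, hf⟩⟩
  obtain ⟨k, ⟨e⟩⟩ := Finite.exists_equiv_fin ι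
  obtain ⟨k, rfl⟩ : ∃ k', k = k' + 1 :=
    Nat.exists_eq_succ_of_ne_zero fun hk => (hk ▸ e).isEmpty.elim (Classical.arbitrary ι)
  exact ⟨k, fun j => Q (e.symm j), fun j => hQ _, fun x => by
    rw [hf]; exact (e.symm.iInf_comp (g := fun i => augQuadForm (Q i) x)).symm⟩

theorem const (c : ℝ) : HasMinPlusExpansion fun _ : Fin n → ℝ => c :=
  ⟨Unit, inferInstance, inferInstance, fun _ => single (Fin.last n) (Fin.last n) c,
    fun _ => by rw [IsSymm, transpose_single], fun x => by simp [augQuadForm_single_last]⟩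

theorem add (hf : HasMinPlusExpansion f) (hg : HasMinPlusExpansion g) :
    HasMinPlusExpansion fun x => f x + g x := by
  obtain ⟨ι, _, _, P, hP, hf⟩ := hf
  obtain ⟨κ, _, _, Q, hQ, hg⟩ := hg
  exact ⟨ι × κ, inferInstance, inferInstance, fun p => P p.1 + Q p.2, fun p => (hP _).add (hQ _),
    fun x => by simp only [hf, hg, ciInf_add_ciInf_of_finite, augQuadForm_add]⟩

theorem const_mul (hf : HasMinPlusExpansion f) {c : ℝ} (hc : 0 ≤ c) :
    HasMinPlusExpansion fun x => c * f x := by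
  obtain ⟨ι, _, _, Q, hQ, hf⟩ := hf
  exact ⟨ι, inferInstance, inferInstance, fun i => c • Q i, fun i => (hQ i).smul c,
    fun x => by simp only [hf, Real.mul_iInf_of_nonneg hc, augQuadForm_smul]⟩

theorem iInf {ι : Type} [Finite ι] [Nonempty ι] {f : ι → (Fin n → ℝ) → ℝ}
    (hf : ∀ i, HasMinPlusExpansion (f i)) : HasMinPlusExpansion fun x => ⨅ i, f i x := by
  choose κ _ _ Q hQ hf using hf
  exact ⟨Σ i, κ i, inferInstance, ⟨⟨Classical.arbitrary ι, Classical.arbitrary _⟩⟩,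
    fun s => Q s.1 s.2, fun s => hQ _ _,
    fun x => by simp only [hf, Finite.ciInf_sigma]⟩

theorem half_residual_sq {m : ℕ} {R : Matrix (Fin m) (Fin m) ℝ} (hR : R.IsSymm)
    {C : (Fin n → ℝ) → Fin m → ℝ} {y : Fin m → ℝ}
    (hy : HasMinPlusExpansion fun x => -(y ⬝ᵥ R *ᵥ C x))
    (hC : HasMinPlusExpansion fun x => C x ⬝ᵥ R *ᵥ C x) :
    HasMinPlusExpansion fun x => (1 / 2) * ((y - C x) ⬝ᵥ R *ᵥ (y - C x)) := by
  have h_split : (fun x => (1 / 2) * ((y - C x) ⬝ᵥ R *ᵥ (y - C x)))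
      = fun x => (1 / 2) * (y ⬝ᵥ R *ᵥ y) + -(y ⬝ᵥ R *ᵥ C x) + (1 / 2) * (C x ⬝ᵥ R *ᵥ C x) := by
    funext x
    simp only [mulVec_sub, dotProduct_sub, sub_dotProduct, hR.dotProduct_mulVec_comm (C x) y]
    ring
  rw [h_split]
  exact ((const _).add hy).add (hC.const_mul (by norm_num))

end HasMinPlusExpansion

/-- Theorem 1 of the paper: if the initial value function `V₀`, the
output-related terms `−yᵀRC(x)` and `C(x)ᵀRC(x)`, and the drift-composed terms
`A(x)ᵀMA(x)` and `M̃A(x)` all admit exact min-plus quadratic expansions, then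
the value function `V₁` after one dynamic-programming step again admits a
min-plus quadratic expansion. -/
theorem minplus_recursion_closure {n p m : ℕ}
    (A : (Fin n → ℝ) → (Fin n → ℝ))
    (B : Matrix (Fin n) (Fin p) ℝ)
    (C : (Fin n → ℝ) → (Fin m → ℝ))
    (R : Matrix (Fin m) (Fin m) ℝ) (hR : R.PosDef)
    (Qη : Matrix (Fin p) (Fin p) ℝ) (hQη : Qη.PosDef)
    (y : Fin m → ℝ)
    (I₀ : Type) [Fintype I₀] [Nonempty I₀]
    (Qv0 : I₀ → Matrix (Fin (n + 1)) (Fin (n + 1)) ℝ)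
    (hQv0sym : ∀ i, (Qv0 i).IsSymm)
    (hQv0psd : ∀ i, ((Qv0 i).submatrix Fin.castSucc Fin.castSucc).PosSemidef)
    (V₀ : (Fin n → ℝ) → ℝ)
    (hV₀ : ∀ x, V₀ x = ⨅ i, (1 / 2) * augQuadForm (Qv0 i) x)
    (hy : ∃ (k : ℕ) (Qc : Fin (k + 1) → Matrix (Fin (n + 1)) (Fin (n + 1)) ℝ),
      (∀ j, (Qc j).IsSymm) ∧
        ∀ x, -(y ⬝ᵥ R.mulVec (C x)) = ⨅ j, augQuadForm (Qc j) x)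
    (hc : ∃ (k : ℕ) (Qb : Fin (k + 1) → Matrix (Fin (n + 1)) (Fin (n + 1)) ℝ),
      (∀ l, (Qb l).IsSymm) ∧
        ∀ x, C x ⬝ᵥ R.mulVec (C x) = ⨅ l, augQuadForm (Qb l) x)
    (ha : ∀ M : Matrix (Fin n) (Fin n) ℝ, M.PosSemidef →
      ∃ (k : ℕ) (Qa : Fin (k + 1) → Matrix (Fin (n + 1)) (Fin (n + 1)) ℝ),
        (∀ s, (Qa s).IsSymm) ∧
          ∀ x, A x ⬝ᵥ M.mulVec (A x) = ⨅ s, augQuadForm (Qa s) x)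
    (hta : ∀ Mt : Fin n → ℝ,
      ∃ (k : ℕ) (Qta : Fin (k + 1) → Matrix (Fin (n + 1)) (Fin (n + 1)) ℝ),
        (∀ t, (Qta t).IsSymm) ∧
          ∀ x, Mt ⬝ᵥ A x = ⨅ t, augQuadForm (Qta t) x)
    (V₁ : (Fin n → ℝ) → ℝ)
    (hV₁ : ∀ x, V₁ x = ⨅ w : Fin p → ℝ,
      (V₀ (A x + B.mulVec w) + (1 / 2) * (w ⬝ᵥ Qη.mulVec w)
        + (1 / 2) * ((y - C x) ⬝ᵥ R.mulVec (y - C x)))) :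
    ∃ (k : ℕ) (Qv1 : Fin (k + 1) → Matrix (Fin (n + 1)) (Fin (n + 1)) ℝ),
      (∀ j, (Qv1 j).IsSymm) ∧
        ∀ x, V₁ x = ⨅ j, (1 / 2) * augQuadForm (Qv1 j) x := by
  set N := fun i => (Qv0 i).submatrix Fin.castSucc Fin.castSucc
  set b := fun i (j : Fin n) => Qv0 i j.castSucc (Fin.last n)
  set T := fun x => (1 / 2) * ((y - C x) ⬝ᵥ R *ᵥ (y - C x))
  have h_obj : ∀ x w, V₀ (A x + B *ᵥ w) + (1 / 2) * (w ⬝ᵥ Qη *ᵥ w) + T x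
      = ⨅ i, ((1 / 2) * ((A x + B *ᵥ w) ⬝ᵥ N i *ᵥ (A x + B *ᵥ w)) + b i ⬝ᵥ (A x + B *ᵥ w)
        + (1 / 2) * (w ⬝ᵥ Qη *ᵥ w) + (Qv0 i (Fin.last n) (Fin.last n) / 2 + T x)) := by
    intro x w
    rw [hV₀, ciInf_add_of_finite, ciInf_add_of_finite]
    exact iInf_congr fun i => by rw [augQuadForm_eq (hQv0sym i)]; ring
  have hV₁_eq : ∀ x, V₁ x = ⨅ i, ((1 / 2) * (A x ⬝ᵥ riccatiUpdate B Qη (N i) *ᵥ A x)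
      + (b i - N i *ᵥ (riccatiGain B Qη (N i) *ᵥ b i)) ⬝ᵥ A x
      + (Qv0 i (Fin.last n) (Fin.last n) / 2 - (1 / 2) * (b i ⬝ᵥ riccatiGain B Qη (N i) *ᵥ b i))
      + T x) := fun x => by
    rw [hV₁ x, iInf_congr (h_obj x), iInf_iInf_quadratic_affine_eq hQv0psd hQη]
    exact iInf_congr fun i => by ring
  have hV₁_exp : HasMinPlusExpansion V₁ := by
    rw [funext hV₁_eq]
    refine .iInf fun i => ((((HasMinPlusExpansion.iff_exists_fin.mpr
      (ha _ (riccatiUpdate_posSemidef (hQv0psd i) hQη))).const_mul (by norm_num)).add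
      (HasMinPlusExpansion.iff_exists_fin.mpr (hta _))).add (.const _)).add ?_
    exact .half_residual_sq (isHermitian_iff_isSymm.mp hR.isHermitian)
      (HasMinPlusExpansion.iff_exists_fin.mpr hy) (HasMinPlusExpansion.iff_exists_fin.mpr hc)
  obtain ⟨k, Q, hQ, hV₁Q⟩ := HasMinPlusExpansion.iff_exists_fin.mp hV₁_exp
  exact ⟨k, fun j => (2 : ℝ) • Q j, fun j => (hQ j).smul _,
    fun x => by simp [hV₁Q x, augQuadForm_smul]⟩
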